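/- arXiv:2310.18001 — 3 statements merged into one kernel-verified Lean document; each statement's English description precedes it below -/
import Mathlib

section
/- For the 2D convolution x_{out,c,r,s} = Σ_{d,i,j} x_{d,r+i,s+j} θ_{c,d,i,j} with filter of height h' and width w' (zero padding out of range), the output norm satisfies ‖θ ∗ x‖₂ ≤ √(h'w') · ‖x‖₂ · ‖θ‖₂, where all norms are Euclidean norms of the flattened tensors. -/
/-- Extension of an image by zero outside its range. -/
def extendZero (cin N : ℕ) (x : Fin cin → Fin N → Fin N → ℝ) : Fin cin → ℕ → ℕ → ℝ :=
  fun d r s => if h : r < N ∧ s < N then x d ⟨r, h.1⟩ ⟨s, h.2⟩ else 0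

/-- 2D convolution with zero padding. -/
def conv2d (cin cout N h' w' : ℕ) (θ : Fin cout → Fin cin → Fin h' → Fin w' → ℝ)
    (x : Fin cin → Fin N → Fin N → ℝ) : Fin cout → Fin N → Fin N → ℝ :=
  fun c r s => ∑ d, ∑ i, ∑ j, extendZero cin N x d (r.1 + i.1) (s.1 + j.1) * θ c d i j

private lemma shift_le (N i : ℕ) (g : ℕ → ℝ) (hg : ∀ k, 0 ≤ g k)
    (h0 : ∀ k, N ≤ k → g k = 0) :
    ∑ r : Fin N, g (r.1 + i) ≤ ∑ r : Fin N, g r.1 := by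
  rw [Fin.sum_univ_eq_sum_range (fun r => g (r + i)), Fin.sum_univ_eq_sum_range (fun r => g r)]
  have h1 : ∑ r ∈ Finset.range N, g (r + i) = ∑ r ∈ Finset.Ico i (i + N), g r := by
    rw [Finset.sum_Ico_eq_sum_range]
    simp [Nat.add_sub_cancel_left, add_comm]
  rw [h1]
  calc ∑ r ∈ Finset.Ico i (i + N), g r
      ≤ ∑ r ∈ Finset.range (i + N), g r := by
        apply Finset.sum_le_sum_of_subset_of_nonneg
        · intro k hk
          simp only [Finset.mem_Ico, Finset.mem_range] at *
          omega
        · exact fun k _ _ => hg k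
    _ = ∑ r ∈ Finset.range N, g r := by
        refine (Finset.sum_subset (Finset.range_subset_range.2 (Nat.le_add_left N i)) ?_).symm
        intro k _ hk
        exact h0 k (by simpa using hk)

private lemma sum_swap5 {A B C D E : Type*} [Fintype A] [Fintype B] [Fintype C]
    [Fintype D] [Fintype E] (f : A → B → C → D → E → ℝ) :
    ∑ a, ∑ b, ∑ c, ∑ d, ∑ e, f a b c d e = ∑ c, ∑ d, ∑ e, ∑ a, ∑ b, f a b c d e := by
  have h : (∑ q : A × B, ∑ p : C × D × E, f q.1 q.2 p.1 p.2.1 p.2.2)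
      = ∑ p : C × D × E, ∑ q : A × B, f q.1 q.2 p.1 p.2.1 p.2.2 := Finset.sum_comm
  simpa [Fintype.sum_prod_type] using h

set_option maxHeartbeats 1000000 in
theorem conv_output_norm_bound (cin cout N h' w' : ℕ)
    (θ : Fin cout → Fin cin → Fin h' → Fin w' → ℝ)
    (x : Fin cin → Fin N → Fin N → ℝ) :
    Real.sqrt (∑ c, ∑ r, ∑ s, (conv2d cin cout N h' w' θ x c r s) ^ 2) ≤
      Real.sqrt ((h' : ℝ) * w') * Real.sqrt (∑ d, ∑ r, ∑ s, (x d r s) ^ 2) *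
        Real.sqrt (∑ c, ∑ d, ∑ i, ∑ j, (θ c d i j) ^ 2) := by
  set X : ℝ := ∑ d, ∑ r, ∑ s, (x d r s) ^ 2 with hX
  have hXnn : 0 ≤ X := Finset.sum_nonneg fun _ _ => Finset.sum_nonneg fun _ _ =>
    Finset.sum_nonneg fun _ _ => sq_nonneg _
  -- pointwise Cauchy-Schwarz
  have hcs : ∀ (c : Fin cout) (r s : Fin N),
      (conv2d cin cout N h' w' θ x c r s) ^ 2 ≤
        (∑ d, ∑ i : Fin h', ∑ j : Fin w', (extendZero cin N x d (r.1 + i.1) (s.1 + j.1)) ^ 2) *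
          (∑ d, ∑ i, ∑ j, (θ c d i j) ^ 2) := by
    intro c r s
    have := Finset.sum_mul_sq_le_sq_mul_sq (Finset.univ : Finset (Fin cin × Fin h' × Fin w'))
      (fun p => extendZero cin N x p.1 (r.1 + p.2.1.1) (s.1 + p.2.2.1))
      (fun p => θ c p.1 p.2.1 p.2.2)
    simpa [conv2d, Fintype.sum_prod_type] using this
  -- shifted-sum bound
  have hshift : ∀ (d : Fin cin) (i : Fin h') (j : Fin w'),
      ∑ r : Fin N, ∑ s : Fin N, (extendZero cin N x d (r.1 + i.1) (s.1 + j.1)) ^ 2 ≤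
        ∑ r, ∑ s, (x d r s) ^ 2 := by
    intro d i j
    have hstep1 : ∀ (r' : ℕ),
        ∑ s : Fin N, (extendZero cin N x d r' (s.1 + j.1)) ^ 2 ≤
          ∑ s : Fin N, (extendZero cin N x d r' s.1) ^ 2 := by
      intro r'
      refine shift_le N j.1 (fun k => (extendZero cin N x d r' k) ^ 2)
        (fun k => sq_nonneg _) ?_
      intro k hk
      simp [extendZero, Nat.not_lt.2 hk]
    calc ∑ r : Fin N, ∑ s : Fin N, (extendZero cin N x d (r.1 + i.1) (s.1 + j.1)) ^ 2
        ≤ ∑ r : Fin N, ∑ s : Fin N, (extendZero cin N x d (r.1 + i.1) s.1) ^ 2 :=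
          Finset.sum_le_sum fun r _ => hstep1 (r.1 + i.1)
      _ ≤ ∑ r : Fin N, ∑ s : Fin N, (extendZero cin N x d r.1 s.1) ^ 2 := by
          refine shift_le N i.1 (fun k => ∑ s : Fin N, (extendZero cin N x d k s.1) ^ 2)
            (fun k => Finset.sum_nonneg fun _ _ => sq_nonneg _) ?_
          intro k hk
          apply Finset.sum_eq_zero
          intro s _
          simp [extendZero, Nat.not_lt.2 hk]
      _ = ∑ r, ∑ s, (x d r s) ^ 2 := by
          refine Finset.sum_congr rfl fun r _ => Finset.sum_congr rfl fun s _ => ?_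
          simp [extendZero, r.2, s.2]
  -- sum bound
  have hmain : ∑ c, ∑ r, ∑ s, (conv2d cin cout N h' w' θ x c r s) ^ 2 ≤
      ((h' : ℝ) * w') * X * ∑ c, ∑ d, ∑ i, ∑ j, (θ c d i j) ^ 2 := by
    rw [Finset.mul_sum]
    refine Finset.sum_le_sum fun c _ => ?_
    calc ∑ r, ∑ s, (conv2d cin cout N h' w' θ x c r s) ^ 2
        ≤ ∑ r : Fin N, ∑ s : Fin N,
            (∑ d, ∑ i : Fin h', ∑ j : Fin w', (extendZero cin N x d (r.1 + i.1) (s.1 + j.1)) ^ 2) *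
              (∑ d, ∑ i, ∑ j, (θ c d i j) ^ 2) :=
          Finset.sum_le_sum fun r _ => Finset.sum_le_sum fun s _ => hcs c r s
      _ = (∑ r : Fin N, ∑ s : Fin N,
            ∑ d, ∑ i : Fin h', ∑ j : Fin w', (extendZero cin N x d (r.1 + i.1) (s.1 + j.1)) ^ 2) *
              (∑ d, ∑ i, ∑ j, (θ c d i j) ^ 2) := by
          rw [Finset.sum_mul]
          exact Finset.sum_congr rfl fun r _ => (Finset.sum_mul _ _ _).symm
      _ ≤ ((h' : ℝ) * w') * X * (∑ d, ∑ i, ∑ j, (θ c d i j) ^ 2) := by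
          have hθnn : 0 ≤ ∑ d, ∑ i, ∑ j, (θ c d i j) ^ 2 :=
            Finset.sum_nonneg fun _ _ => Finset.sum_nonneg fun _ _ =>
              Finset.sum_nonneg fun _ _ => sq_nonneg _
          refine mul_le_mul_of_nonneg_right ?_ hθnn
          calc ∑ r : Fin N, ∑ s : Fin N,
                ∑ d, ∑ i : Fin h', ∑ j : Fin w', (extendZero cin N x d (r.1 + i.1) (s.1 + j.1)) ^ 2
              = ∑ d, ∑ i : Fin h', ∑ j : Fin w',
                  ∑ r : Fin N, ∑ s : Fin N,
                    (extendZero cin N x d (r.1 + i.1) (s.1 + j.1)) ^ 2 := by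
                exact sum_swap5 _
            _ ≤ ∑ _d : Fin cin, ∑ _i : Fin h', ∑ _j : Fin w', ∑ r, ∑ s, (x _d r s) ^ 2 :=
                Finset.sum_le_sum fun d _ => Finset.sum_le_sum fun i _ =>
                  Finset.sum_le_sum fun j _ => hshift d i j
            _ = ((h' : ℝ) * w') * X := by
                simp [Finset.sum_const, hX, Finset.mul_sum]
                ring
  have h2 := Real.sqrt_le_sqrt hmain
  refine h2.trans (le_of_eq ?_)
  rw [Real.sqrt_mul (by positivity), Real.sqrt_mul (by positivity)]
end

section
/- The convolution map x ↦ θ ∗ x (with θ fixed) is √(h'w')·‖θ‖₂-Lipschitz, and the map θ ↦ θ ∗ x (with x fixed) is √(h'w')·‖x‖₂-Lipschitz, in Euclidean norms of flattened tensors. -/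
open Finset

theorem sum_reorder5 {A B C D E : Type*} [Fintype A] [Fintype B] [Fintype C] [Fintype D]
    [Fintype E] (g : C → D → E → A → B → ℝ) :
    (∑ r : A, ∑ s : B, ∑ d : C, ∑ i : D, ∑ j : E, g d i j r s)
      = ∑ d : C, ∑ i : D, ∑ j : E, ∑ r : A, ∑ s : B, g d i j r s := by
  calc (∑ r : A, ∑ s : B, ∑ d : C, ∑ i : D, ∑ j : E, g d i j r s)
      = ∑ r : A, ∑ d : C, ∑ s : B, ∑ i : D, ∑ j : E, g d i j r s :=
        Finset.sum_congr rfl fun r _ => Finset.sum_comm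
    _ = ∑ d : C, ∑ r : A, ∑ s : B, ∑ i : D, ∑ j : E, g d i j r s := Finset.sum_comm
    _ = ∑ d : C, ∑ r : A, ∑ i : D, ∑ s : B, ∑ j : E, g d i j r s :=
        Finset.sum_congr rfl fun d _ => Finset.sum_congr rfl fun r _ => Finset.sum_comm
    _ = ∑ d : C, ∑ i : D, ∑ r : A, ∑ s : B, ∑ j : E, g d i j r s :=
        Finset.sum_congr rfl fun d _ => Finset.sum_comm
    _ = ∑ d : C, ∑ i : D, ∑ r : A, ∑ j : E, ∑ s : B, g d i j r s :=
        Finset.sum_congr rfl fun d _ => Finset.sum_congr rfl fun i _ =>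
          Finset.sum_congr rfl fun r _ => Finset.sum_comm
    _ = ∑ d : C, ∑ i : D, ∑ j : E, ∑ r : A, ∑ s : B, g d i j r s :=
        Finset.sum_congr rfl fun d _ => Finset.sum_congr rfl fun i _ => Finset.sum_comm

theorem shift_sum_le {N : ℕ} (f : ℕ → ℝ) (hf : ∀ a, 0 ≤ f a) (h0 : ∀ a, N ≤ a → f a = 0)
    (i : ℕ) : ∑ r ∈ range N, f (r + i) ≤ ∑ a ∈ range N, f a := by
  have h1 : ∑ r ∈ range N, f (r + i) = ∑ a ∈ Finset.Ico i (i + N), f a := by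
    rw [Finset.sum_Ico_eq_sum_range]
    simp [add_comm]
  have h2 : ∑ a ∈ Finset.Ico i (i + N), f a ≤ ∑ a ∈ range (i + N), f a := by
    apply Finset.sum_le_sum_of_subset_of_nonneg
    · intro a ha; simp only [Finset.mem_Ico] at ha; simp [ha.2]
    · intro a _ _; exact hf a
  have h3 : ∑ a ∈ range (i + N), f a = ∑ a ∈ range N, f a := by
    rw [show i + N = N + i by ring, Finset.sum_range_add]
    have : ∑ k ∈ range i, f (N + k) = 0 :=
      Finset.sum_eq_zero fun k _ => h0 _ (Nat.le_add_right N k)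
    simp [this]
  rw [h1]; exact h2.trans h3.le

theorem extend_shift_sum_le (cin N : ℕ) (x : Fin cin → Fin N → Fin N → ℝ) (d : Fin cin)
    (i j : ℕ) :
    ∑ r : Fin N, ∑ s : Fin N, extendZero cin N x d (r.1 + i) (s.1 + j) ^ 2 ≤
      ∑ r : Fin N, ∑ s : Fin N, x d r s ^ 2 := by
  have hz : ∀ a b : ℕ, N ≤ a ∨ N ≤ b → extendZero cin N x d a b = 0 := by
    intro a b hab
    unfold extendZero
    rw [dif_neg]; omega
  have l1 : (∑ r : Fin N, ∑ s : Fin N, extendZero cin N x d (r.1 + i) (s.1 + j) ^ 2)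
      = ∑ r ∈ range N, ∑ s ∈ range N, extendZero cin N x d (r + i) (s + j) ^ 2 := by
    rw [Fin.sum_univ_eq_sum_range
      (fun r => ∑ s : Fin N, extendZero cin N x d (r + i) (s.1 + j) ^ 2) N]
    exact Finset.sum_congr rfl fun r _ =>
      Fin.sum_univ_eq_sum_range (fun s => extendZero cin N x d (r + i) (s + j) ^ 2) N
  have l2 : (∑ r : Fin N, ∑ s : Fin N, x d r s ^ 2)
      = ∑ r ∈ range N, ∑ s ∈ range N, extendZero cin N x d r s ^ 2 := by
    have step1 : (∑ r : Fin N, ∑ s : Fin N, x d r s ^ 2)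
        = ∑ r : Fin N, ∑ s : Fin N, extendZero cin N x d r.1 s.1 ^ 2 :=
      Finset.sum_congr rfl fun r _ => Finset.sum_congr rfl fun s _ => by
        simp [extendZero, r.isLt, s.isLt]
    rw [step1, Fin.sum_univ_eq_sum_range
      (fun r => ∑ s : Fin N, extendZero cin N x d r s.1 ^ 2) N]
    exact Finset.sum_congr rfl fun r _ =>
      Fin.sum_univ_eq_sum_range (fun s => extendZero cin N x d r s ^ 2) N
  rw [l1, l2]
  calc ∑ r ∈ range N, ∑ s ∈ range N, extendZero cin N x d (r + i) (s + j) ^ 2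
      ≤ ∑ r ∈ range N, ∑ s ∈ range N, extendZero cin N x d (r + i) s ^ 2 := by
        apply Finset.sum_le_sum
        intro r _
        exact shift_sum_le (fun b => extendZero cin N x d (r + i) b ^ 2)
          (fun a => sq_nonneg _)
          (fun a ha => by simp [hz _ _ (Or.inr ha)]) j
    _ = ∑ s ∈ range N, ∑ r ∈ range N, extendZero cin N x d (r + i) s ^ 2 :=
        Finset.sum_comm
    _ ≤ ∑ s ∈ range N, ∑ r ∈ range N, extendZero cin N x d r s ^ 2 := by
        apply Finset.sum_le_sum
        intro s _
        exact shift_sum_le (fun a => extendZero cin N x d a s ^ 2)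
          (fun a => sq_nonneg _)
          (fun a ha => by simp [hz _ _ (Or.inl ha)]) i
    _ = ∑ r ∈ range N, ∑ s ∈ range N, extendZero cin N x d r s ^ 2 := Finset.sum_comm

theorem conv_sq_le (cin cout N h' w' : ℕ) (θ : Fin cout → Fin cin → Fin h' → Fin w' → ℝ)
    (x : Fin cin → Fin N → Fin N → ℝ) :
    ∑ c, ∑ r, ∑ s, conv2d cin cout N h' w' θ x c r s ^ 2 ≤
      ((h' : ℝ) * w') * (∑ c, ∑ d, ∑ i, ∑ j, θ c d i j ^ 2) *
        (∑ d, ∑ r, ∑ s, x d r s ^ 2) := by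
  set E := extendZero cin N x with hE
  have CS : ∀ (c : Fin cout) (r s : Fin N),
      conv2d cin cout N h' w' θ x c r s ^ 2 ≤
        (∑ d, ∑ i : Fin h', ∑ j : Fin w', E d (r.1 + i.1) (s.1 + j.1) ^ 2) *
          (∑ d, ∑ i, ∑ j, θ c d i j ^ 2) := by
    intro c r s
    have h := Finset.sum_mul_sq_le_sq_mul_sq Finset.univ
      (fun p : Fin cin × Fin h' × Fin w' => E p.1 (r.1 + p.2.1.1) (s.1 + p.2.2.1))
      (fun p : Fin cin × Fin h' × Fin w' => θ c p.1 p.2.1 p.2.2)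
    simpa [conv2d, Fintype.sum_prod_type, hE] using h
  have hEbound : (∑ r : Fin N, ∑ s : Fin N, ∑ d, ∑ i : Fin h', ∑ j : Fin w',
      E d (r.1 + i.1) (s.1 + j.1) ^ 2) ≤ ((h' : ℝ) * w') * ∑ d, ∑ r, ∑ s, x d r s ^ 2 := by
    rw [sum_reorder5 (fun d (i : Fin h') (j : Fin w') (r s : Fin N) =>
      E d (r.1 + i.1) (s.1 + j.1) ^ 2)]
    calc (∑ d, ∑ i : Fin h', ∑ j : Fin w', ∑ r : Fin N, ∑ s : Fin N,
          E d (r.1 + i.1) (s.1 + j.1) ^ 2)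
        ≤ ∑ d, ∑ _i : Fin h', ∑ _j : Fin w', ∑ r, ∑ s, x d r s ^ 2 := by
          refine Finset.sum_le_sum fun d _ => Finset.sum_le_sum fun i _ =>
            Finset.sum_le_sum fun j _ => extend_shift_sum_le cin N x d i.1 j.1
      _ = ((h' : ℝ) * w') * ∑ d, ∑ r, ∑ s, x d r s ^ 2 := by
          simp [Finset.sum_const, Finset.mul_sum, mul_assoc]
  calc ∑ c, ∑ r, ∑ s, conv2d cin cout N h' w' θ x c r s ^ 2
      ≤ ∑ c, ∑ r : Fin N, ∑ s : Fin N,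
          (∑ d, ∑ i : Fin h', ∑ j : Fin w', E d (r.1 + i.1) (s.1 + j.1) ^ 2) *
            (∑ d, ∑ i, ∑ j, θ c d i j ^ 2) :=
        Finset.sum_le_sum fun c _ => Finset.sum_le_sum fun r _ =>
          Finset.sum_le_sum fun s _ => CS c r s
    _ = (∑ r : Fin N, ∑ s : Fin N, ∑ d, ∑ i : Fin h', ∑ j : Fin w',
          E d (r.1 + i.1) (s.1 + j.1) ^ 2) * (∑ c, ∑ d, ∑ i, ∑ j, θ c d i j ^ 2) := by
        simp only [← Finset.sum_mul, ← Finset.mul_sum]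
    _ ≤ (((h' : ℝ) * w') * ∑ d, ∑ r, ∑ s, x d r s ^ 2) *
          (∑ c, ∑ d, ∑ i, ∑ j, θ c d i j ^ 2) := by
        apply mul_le_mul_of_nonneg_right hEbound
        positivity
    _ = _ := by ring

theorem conv_norm_le (cin cout N h' w' : ℕ) (θ : Fin cout → Fin cin → Fin h' → Fin w' → ℝ)
    (x : Fin cin → Fin N → Fin N → ℝ) :
    Real.sqrt (∑ c, ∑ r, ∑ s, conv2d cin cout N h' w' θ x c r s ^ 2) ≤
      Real.sqrt ((h' : ℝ) * w') * Real.sqrt (∑ c, ∑ d, ∑ i, ∑ j, θ c d i j ^ 2) *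
        Real.sqrt (∑ d, ∑ r, ∑ s, x d r s ^ 2) := by
  have h := conv_sq_le cin cout N h' w' θ x
  calc Real.sqrt (∑ c, ∑ r, ∑ s, conv2d cin cout N h' w' θ x c r s ^ 2)
      ≤ Real.sqrt (((h' : ℝ) * w') * (∑ c, ∑ d, ∑ i, ∑ j, θ c d i j ^ 2) *
          (∑ d, ∑ r, ∑ s, x d r s ^ 2)) := Real.sqrt_le_sqrt h
    _ = _ := by
        rw [Real.sqrt_mul (by positivity), Real.sqrt_mul (by positivity)]

theorem conv_lipschitz (cin cout N h' w' : ℕ) :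
    (∀ (θ : Fin cout → Fin cin → Fin h' → Fin w' → ℝ)
       (x x' : Fin cin → Fin N → Fin N → ℝ),
      Real.sqrt (∑ c, ∑ r, ∑ s,
          (conv2d cin cout N h' w' θ x c r s - conv2d cin cout N h' w' θ x' c r s) ^ 2) ≤
        Real.sqrt ((h' : ℝ) * w') * Real.sqrt (∑ c, ∑ d, ∑ i, ∑ j, (θ c d i j) ^ 2) *
          Real.sqrt (∑ d, ∑ r, ∑ s, (x d r s - x' d r s) ^ 2)) ∧
    (∀ (θ θ' : Fin cout → Fin cin → Fin h' → Fin w' → ℝ)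
       (x : Fin cin → Fin N → Fin N → ℝ),
      Real.sqrt (∑ c, ∑ r, ∑ s,
          (conv2d cin cout N h' w' θ x c r s - conv2d cin cout N h' w' θ' x c r s) ^ 2) ≤
        Real.sqrt ((h' : ℝ) * w') * Real.sqrt (∑ d, ∑ r, ∑ s, (x d r s) ^ 2) *
          Real.sqrt (∑ c, ∑ d, ∑ i, ∑ j, (θ c d i j - θ' c d i j) ^ 2)) := by
  constructor
  · intro θ x x'
    have hdiff : ∀ (c : Fin cout) (r s : Fin N),
        conv2d cin cout N h' w' θ x c r s - conv2d cin cout N h' w' θ x' c r s =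
          conv2d cin cout N h' w' θ (fun d r s => x d r s - x' d r s) c r s := by
      intro c r s
      simp only [conv2d, ← Finset.sum_sub_distrib]
      refine Finset.sum_congr rfl fun d _ => Finset.sum_congr rfl fun i _ =>
        Finset.sum_congr rfl fun j _ => ?_
      rw [← sub_mul]
      congr 1
      unfold extendZero
      by_cases h : r.1 + i.1 < N ∧ s.1 + j.1 < N <;> simp [h]
    simp only [hdiff]
    exact conv_norm_le cin cout N h' w' θ _
  · intro θ θ' x
    have hdiff : ∀ (c : Fin cout) (r s : Fin N),
        conv2d cin cout N h' w' θ x c r s - conv2d cin cout N h' w' θ' x c r s =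
          conv2d cin cout N h' w' (fun c d i j => θ c d i j - θ' c d i j) x c r s := by
      intro c r s
      simp only [conv2d, ← Finset.sum_sub_distrib]
      refine Finset.sum_congr rfl fun d _ => Finset.sum_congr rfl fun i _ =>
        Finset.sum_congr rfl fun j _ => ?_
      ring
    simp only [hdiff]
    have h := conv_norm_le cin cout N h' w' (fun c d i j => θ c d i j - θ' c d i j) x
    calc _ ≤ _ := h
      _ = _ := by ring
end

section
/- Bias of gradient clipping: there exists a random vector g in R² with ‖E[g]‖ = 0 such that ‖E[clip_1(g)]‖ > 0; concretely, if g takes value (18x, 18) with probability 0.1 and (−2x, −2) with probability 0.9 where x is uniform on [0,1] (independent), then E[g] = 0 but E[clip_1(g)] ≠ 0. -/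
/-!
Both gradient values are outside the unit ball and are multiples, `18` and `-2`, of the same
vector `(x, 1)`. Clipping therefore maps them to `±(x, 1) / ‖(x, 1)‖`: the magnitudes that
balanced the weights `0.1` and `0.9` are erased, the clipped mean is `-0.8 • (x, 1) / ‖(x, 1)‖`,
and its second coordinate has a strictly negative integral.
-/

open MeasureTheory

/-- Clipping to the unit ball in ℝ². -/
noncomputable def clip1 (v : EuclideanSpace ℝ (Fin 2)) : EuclideanSpace ℝ (Fin 2) :=
  (min 1 (1 / ‖v‖)) • v

/-- Gradient when the error is +9 (value (18x, 18)). -/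
noncomputable def g₁ (x : ℝ) : EuclideanSpace ℝ (Fin 2) :=
  (EuclideanSpace.equiv (Fin 2) ℝ).symm ![18 * x, 18]

/-- Gradient when the error is −1 (value (−2x, −2)). -/
noncomputable def g₂ (x : ℝ) : EuclideanSpace ℝ (Fin 2) :=
  (EuclideanSpace.equiv (Fin 2) ℝ).symm ![-2 * x, -2]

lemma clip1_eq_inv_max_smul (v : EuclideanSpace ℝ (Fin 2)) : clip1 v = (max 1 ‖v‖)⁻¹ • v := by
  rcases eq_or_ne v 0 with rfl | hv
  · simp [clip1]
  · rw [clip1]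
    congr 1
    rcases le_total 1 ‖v‖ with h | h
    · rw [min_eq_right ((div_le_one (norm_pos_iff.2 hv)).2 h), max_eq_right h, one_div]
    · rw [min_eq_left ((one_le_div (norm_pos_iff.2 hv)).2 h), max_eq_left h, inv_one]

lemma continuous_clip1 : Continuous clip1 := by
  simp_rw [funext clip1_eq_inv_max_smul]
  exact ((continuous_const.max continuous_norm).inv₀
    fun v => (zero_lt_one.trans_le (le_max_left 1 ‖v‖)).ne').smul continuous_id

lemma clip1_of_one_le_norm {v : EuclideanSpace ℝ (Fin 2)} (hv : 1 ≤ ‖v‖) : clip1 v = ‖v‖⁻¹ • v := by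
  rw [clip1_eq_inv_max_smul, max_eq_right hv]

lemma clip1_smul {c : ℝ} {v : EuclideanSpace ℝ (Fin 2)} (hc : 1 ≤ |c|) (hv : 1 ≤ ‖v‖) :
    clip1 (c • v) = (SignType.sign c : ℝ) • clip1 v := by
  have hcv : 1 ≤ ‖c • v‖ := by rw [norm_smul, Real.norm_eq_abs]; nlinarith
  have hc0 : |c| ≠ 0 := by positivity
  rw [clip1_of_one_le_norm hcv, clip1_of_one_le_norm hv, smul_smul, smul_smul, norm_smul,
    Real.norm_eq_abs]
  congr 1
  calc (|c| * ‖v‖)⁻¹ * c = (|c| * ‖v‖)⁻¹ * (SignType.sign c * |c|) := by rw [sign_mul_abs]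
    _ = SignType.sign c * ‖v‖⁻¹ := by field_simp

lemma integral_Icc_apply_pos {ι : Type*} [Fintype ι] {f : ℝ → EuclideanSpace ℝ ι} {a b : ℝ}
    (hab : a < b) (i : ι) (hf : Continuous f) (hpos : ∀ x, 0 < f x i) :
    0 < (∫ x in Set.Icc a b, f x) i := by
  have hcoord : (∫ x in Set.Icc a b, f x) i = ∫ x in a..b, f x i := by
    rw [← PiLp.proj_apply (𝕜 := ℝ) 2 _ i, ← ContinuousLinearMap.integral_comp_comm _
      hf.integrableOn_Icc, integral_Icc_eq_integral_Ioc, intervalIntegral.integral_of_le hab.le]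
    rfl
  rw [hcoord]
  exact intervalIntegral.intervalIntegral_pos_of_pos
    ((PiLp.continuous_apply 2 _ i).comp hf |>.intervalIntegrable a b) hpos hab

/-- The regressor `(x, 1)`; the squared-loss gradient at error `e` is `2 e • feature x`. -/
noncomputable def feature (x : ℝ) : EuclideanSpace ℝ (Fin 2) :=
  (EuclideanSpace.equiv (Fin 2) ℝ).symm ![x, 1]

lemma g₁_eq_smul_feature (x : ℝ) : g₁ x = (18 : ℝ) • feature x := by
  ext i; fin_cases i <;> simp [g₁, feature]

lemma g₂_eq_smul_feature (x : ℝ) : g₂ x = (-2 : ℝ) • feature x := by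
  ext i; fin_cases i <;> simp [g₂, feature]

lemma one_le_norm_feature (x : ℝ) : 1 ≤ ‖feature x‖ := by
  simpa [feature] using PiLp.norm_apply_le (feature x) 1

lemma continuous_feature : Continuous feature :=
  (EuclideanSpace.equiv (Fin 2) ℝ).symm.continuous.comp
    (continuous_pi fun i => by fin_cases i <;> simp <;> fun_prop)

lemma clip1_feature_apply_one_pos (x : ℝ) : 0 < clip1 (feature x) 1 := by
  have hx := one_le_norm_feature x
  have hx1 : feature x 1 = 1 := by simp [feature]
  rw [clip1_of_one_le_norm hx, PiLp.smul_apply, hx1, smul_eq_mul, mul_one]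
  exact inv_pos.2 (zero_lt_one.trans_le hx)

theorem gradient_clipping_bias :
    (∫ x in Set.Icc (0 : ℝ) 1, ((0.1 : ℝ) • g₁ x + (0.9 : ℝ) • g₂ x)) = 0 ∧
    (∫ x in Set.Icc (0 : ℝ) 1, ((0.1 : ℝ) • clip1 (g₁ x) + (0.9 : ℝ) • clip1 (g₂ x))) ≠ 0 := by
  have hclip (x : ℝ) :
      (0.1 : ℝ) • clip1 (g₁ x) + (0.9 : ℝ) • clip1 (g₂ x) = (-0.8 : ℝ) • clip1 (feature x) := by
    rw [g₁_eq_smul_feature, g₂_eq_smul_feature, clip1_smul (by norm_num) (one_le_norm_feature x),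
      clip1_smul (by norm_num) (one_le_norm_feature x), smul_smul, smul_smul, ← add_smul]
    norm_num
  have hmean (x : ℝ) : (0.1 : ℝ) • g₁ x + (0.9 : ℝ) • g₂ x = 0 := by
    rw [g₁_eq_smul_feature, g₂_eq_smul_feature, smul_smul, smul_smul, ← add_smul]
    norm_num
  refine ⟨by simp only [hmean, integral_zero], ?_⟩
  simp only [hclip, integral_smul]
  refine smul_ne_zero (by norm_num) fun h => ?_
  have := integral_Icc_apply_pos zero_lt_one 1 (continuous_clip1.comp continuous_feature)
    clip1_feature_apply_one_pos
  simp [h] at this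
end
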